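/- arXiv:math/0407259 — 2 statements merged into one kernel-verified Lean document; each statement's English description precedes it below -/
import Mathlib

section
/- Let f be a ternary cubic with real coefficients and suppose c ∈ ℝ satisfies (1/2)·Σ_{p,q=1}^{3} B_{pq}·∂²B_{ij}/∂x_p∂x_q = c·x_i·x_j for all i, j ∈ {1,2,3}. Then one has the polynomial identity (1/2)·Σ_{i,j=1}^{3} B_{ij}·∂²H/∂x_i∂x_j = 6·c·f in ℝ[x₁,x₂,x₃]. -/
/-!
Write `A` for the Hessian matrix and `B = adj A`. Since `f` is a cubic, the entries of `A` are
linear forms, so their second derivatives vanish. Differentiating the trace identity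
`3 H = ∑ A_ij B_ji` twice and comparing with Jacobi's formula `∂H = ∑ B_ji ∂A_ij` gives
`∂_p ∂_q H = ∑ A_ij ∂_p ∂_q B_ji`. Substituting this and the hypothesis turns the left-hand side
into `c ∑ A_ij x_i x_j`, which is `6 c f` by Euler's identity applied twice.
-/

open MvPolynomial

noncomputable section

/-- The Hessian matrix of second partial derivatives of `f`. -/
def hessian (f : MvPolynomial (Fin 3) ℝ) : Matrix (Fin 3) (Fin 3) (MvPolynomial (Fin 3) ℝ) :=
  fun i j => pderiv i (pderiv j f)

/-- The adjugate (cofactor) matrix of the Hessian matrix of `f`. -/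
def Bmat (f : MvPolynomial (Fin 3) ℝ) : Matrix (Fin 3) (Fin 3) (MvPolynomial (Fin 3) ℝ) :=
  (hessian f).adjugate

namespace Matrix

variable {A n : Type*} [CommRing A] [Fintype n] [DecidableEq n]

theorem sum_sum_mul_adjugate (M : Matrix n n A) :
    ∑ i, ∑ j, M i j * M.adjugate j i = Fintype.card n * M.det := by
  simpa [trace, mul_apply] using congrArg trace M.mul_adjugate

end Matrix

namespace Derivation

variable {R A : Type*} [CommRing R] [CommRing A] [Algebra R A]

theorem apply_det_fin_three (D : Derivation R A A) (M : Matrix (Fin 3) (Fin 3) A) :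
    D M.det = ∑ i, ∑ j, M.adjugate j i * D (M i j) := by
  simp only [Matrix.det_fin_three, Matrix.adjugate_fin_three, Fin.sum_univ_three, map_add,
    map_sub, leibniz, smul_eq_mul, Matrix.of_apply, Matrix.cons_val', Matrix.cons_val_zero,
    Matrix.cons_val_fin_one, Matrix.cons_val_one, Matrix.cons_val]
  ring

theorem apply_apply_det_fin_three (D E : Derivation R A A) (hDE : ∀ a, D (E a) = E (D a))
    (M : Matrix (Fin 3) (Fin 3) A) (hM : ∀ i j, D (E (M i j)) = 0) :
    D (E M.det) = ∑ i, ∑ j, M i j * D (E (M.adjugate j i)) := by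
  have htrace := congrArg (fun a => D (E a)) M.sum_sum_mul_adjugate
  have hjacobiE := congrArg D (E.apply_det_fin_three M)
  have hjacobiD := congrArg E (D.apply_det_fin_three M)
  have hED : ∀ i j, E (D (M i j)) = 0 := fun i j => hDE (M i j) ▸ hM i j
  simp only [map_sum, leibniz, smul_eq_mul, map_add, map_natCast, map_zero, hM, hED]
    at htrace hjacobiE hjacobiD
  simp only [Fin.sum_univ_three, Fintype.card_fin] at htrace hjacobiE hjacobiD ⊢
  linear_combination -htrace - hjacobiE - hjacobiD - hDE M.det

end Derivation

namespace MvPolynomial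

variable {R σ : Type*}

theorem pderiv_pderiv_comm [CommRing R] (i j : σ) (p : MvPolynomial σ R) :
    pderiv i (pderiv j p) = pderiv j (pderiv i p) := by
  classical
  have h : ⁅pderiv i, pderiv j⁆ = (0 : Derivation R (MvPolynomial σ R) (MvPolynomial σ R)) :=
    derivation_ext fun k => by
      rw [Derivation.commutator_apply, Derivation.zero_apply, pderiv_X, pderiv_X]
      simp only [Pi.single_apply, apply_ite (pderiv _), pderiv_one, map_zero, ite_self, sub_self]
  have := congr($h p)
  rwa [Derivation.commutator_apply, Derivation.zero_apply, sub_eq_zero] at this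

theorem IsHomogeneous.pderiv_eq_zero [CommSemiring R] {p : MvPolynomial σ R}
    (hp : p.IsHomogeneous 0) (i : σ) : pderiv i p = 0 := by
  rw [← totalDegree_zero_iff_isHomogeneous, totalDegree_eq_zero_iff_eq_C] at hp
  rw [hp, pderiv_C]

theorem IsHomogeneous.sum_X_mul_X_mul_pderiv_pderiv [CommSemiring R] [Fintype σ] {n : ℕ}
    {p : MvPolynomial σ R} (hp : p.IsHomogeneous n) :
    ∑ i, ∑ j, X i * X j * pderiv i (pderiv j p) = (n * (n - 1)) • p := by
  calc ∑ i, ∑ j, X i * X j * pderiv i (pderiv j p)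
      = ∑ j, X j * ∑ i, X i * pderiv i (pderiv j p) := by
        rw [Finset.sum_comm]
        refine Finset.sum_congr rfl fun j _ => ?_
        rw [Finset.mul_sum]
        exact Finset.sum_congr rfl fun i _ => by ring
    _ = ∑ j, X j * ((n - 1) • pderiv j p) := by simp_rw [hp.pderiv.sum_X_mul_pderiv]
    _ = (n - 1) • ∑ j, X j * pderiv j p := by simp_rw [mul_smul_comm, Finset.smul_sum]
    _ = (n * (n - 1)) • p := by rw [hp.sum_X_mul_pderiv, smul_smul, mul_comm]

end MvPolynomial

theorem hessian_isSymm (f : MvPolynomial (Fin 3) ℝ) : (hessian f).IsSymm :=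
  Matrix.IsSymm.ext fun i j => pderiv_pderiv_comm j i f

theorem pderiv_pderiv_hessian_eq_zero {f : MvPolynomial (Fin 3) ℝ} (hf : f.IsHomogeneous 3)
    (p q i j : Fin 3) : pderiv p (pderiv q (hessian f i j)) = 0 :=
  hf.pderiv.pderiv.pderiv.pderiv_eq_zero p

theorem pderiv_pderiv_det_hessian {f : MvPolynomial (Fin 3) ℝ} (hf : f.IsHomogeneous 3)
    (p q : Fin 3) : pderiv p (pderiv q (hessian f).det) =
      ∑ i, ∑ j, hessian f i j * pderiv p (pderiv q (Bmat f i j)) := by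
  rw [(pderiv p).apply_apply_det_fin_three (pderiv q) (pderiv_pderiv_comm p q) _
    (pderiv_pderiv_hessian_eq_zero hf p q)]
  simp only [(hessian_isSymm f).adjugate.apply, Bmat]

/-- If `(1/2) ∑_{p,q} B_{pq} ∂²B_{ij}/∂x_p∂x_q = c x_i x_j` for all `i, j`, then
`(1/2) ∑_{i,j} B_{ij} ∂²H/∂x_i∂x_j = 6 c f`, where `H` is the Hessian determinant. -/
theorem stmt5 (f : MvPolynomial (Fin 3) ℝ) (hf : f.IsHomogeneous 3) (c : ℝ)
    (hc : ∀ i j : Fin 3,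
      C (1/2 : ℝ) * ∑ p : Fin 3, ∑ q : Fin 3,
          Bmat f p q * pderiv p (pderiv q (Bmat f i j)) =
        C c * X i * X j) :
    C (1/2 : ℝ) * ∑ i : Fin 3, ∑ j : Fin 3,
        Bmat f i j * pderiv i (pderiv j (hessian f).det) =
      C (6 * c) * f := by
  calc C (1/2 : ℝ) * ∑ i, ∑ j, Bmat f i j * pderiv i (pderiv j (hessian f).det)
      = ∑ k, ∑ l, hessian f k l *
          (C (1/2 : ℝ) * ∑ i, ∑ j, Bmat f i j * pderiv i (pderiv j (Bmat f k l))) := by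
        simp only [pderiv_pderiv_det_hessian hf, Fin.sum_univ_three]
        ring
    _ = ∑ k, ∑ l, hessian f k l * (C c * X k * X l) := by simp only [hc]
    _ = C c * ∑ k, ∑ l, X k * X l * pderiv k (pderiv l f) := by
        simp only [hessian, Finset.mul_sum]
        exact Finset.sum_congr rfl fun k _ => Finset.sum_congr rfl fun l _ => by ring
    _ = C (6 * c) * f := by
        rw [hf.sum_X_mul_X_mul_pderiv_pderiv, nsmul_eq_mul, map_mul, map_ofNat]
        ring
end
end

section
/- For all natural numbers u, v, w: Σ_{k=0}^{2u+1} C(2u+1, k)·C(2v, v+u−k)·( C(2w, w+u−k) − C(2w, w+u−k+1) ) ≥ 0, where the inner indices are interpreted as integers. -/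
/-- The binomial coefficient `C(n, m)` with integer lower index, with the convention that
`C(n, m) = 0` whenever `m < 0` or `m > n`. -/
def C (n : ℕ) (m : ℤ) : ℤ :=
  if 0 ≤ m then (n.choose m.toNat : ℤ) else 0

lemma C_nonneg (n : ℕ) (m : ℤ) : 0 ≤ C n m := by
  unfold C; split <;> positivity

lemma C_coe (n m : ℕ) : C n (m : ℤ) = (n.choose m : ℤ) := by
  unfold C; simp

lemma C_symm (n : ℕ) (m : ℤ) : C n m = C n ((n : ℤ) - m) := by
  unfold C
  rcases lt_or_ge m 0 with h | h
  · rw [if_neg (by omega), if_pos (by omega)]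
    rw [Nat.choose_eq_zero_of_lt (by omega)]
    simp
  rcases le_or_gt m n with h2 | h2
  · rw [if_pos h, if_pos (by omega)]
    have h3 : ((n : ℤ) - m).toNat = n - m.toNat := by omega
    rw [h3, Nat.choose_symm (by omega)]
  · rw [if_pos h, if_neg (by omega)]
    rw [Nat.choose_eq_zero_of_lt (by omega)]
    simp

lemma choose_dec (n i : ℕ) : (2 * n).choose (n + i + 1) ≤ (2 * n).choose (n + i) := by
  rcases le_or_gt n i with h | h
  · rw [Nat.choose_eq_zero_of_lt (by omega)]
    exact Nat.zero_le _
  · have h1 : (2 * n).choose (n + i + 1) = (2 * n).choose (n - i - 1) := by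
      rw [show n - i - 1 = 2 * n - (n + i + 1) by omega, Nat.choose_symm (by omega)]
    have h2 : (2 * n).choose (n + i) = (2 * n).choose (n - i) := by
      rw [show n - i = 2 * n - (n + i) by omega, Nat.choose_symm (by omega)]
    rw [h1, h2, show n - i = (n - i - 1) + 1 by omega]
    exact Nat.choose_le_succ_of_lt_half_left (by omega)

lemma C_dec (n i : ℕ) : C (2 * n) ((n : ℤ) + i + 1) ≤ C (2 * n) ((n : ℤ) + i) := by
  have e1 : (n : ℤ) + i + 1 = ((n + i + 1 : ℕ) : ℤ) := by push_cast; ring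
  have e2 : (n : ℤ) + i = ((n + i : ℕ) : ℤ) := by push_cast; ring
  rw [e1, e2, C_coe, C_coe]
  exact_mod_cast choose_dec n i

/-- `∑_{k=0}^{2u+1} C(2u+1,k) C(2v, v+u-k) (C(2w, w+u-k) - C(2w, w+u-k+1)) ≥ 0`. -/
theorem stmt12 (u v w : ℕ) :
    0 ≤ ∑ k ∈ Finset.range (2 * u + 2),
        C (2 * u + 1) (k : ℤ) * C (2 * v) ((v : ℤ) + u - k) *
          (C (2 * w) ((w : ℤ) + u - k) - C (2 * w) ((w : ℤ) + u - k + 1)) := by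
  set f : ℕ → ℤ := fun k =>
    C (2 * u + 1) (k : ℤ) * C (2 * v) ((v : ℤ) + u - k) *
      (C (2 * w) ((w : ℤ) + u - k) - C (2 * w) ((w : ℤ) + u - k + 1)) with hf
  have hsplit : ∑ k ∈ Finset.range (2 * u + 2), f k
      = ∑ k ∈ Finset.range (u + 1), (f k + f (2 * u + 1 - k)) := by
    rw [Finset.sum_add_distrib]
    rw [show 2 * u + 2 = (u + 1) + (u + 1) by ring, Finset.sum_range_add]
    congr 1
    rw [← Finset.sum_range_reflect (fun j => f (u + 1 + j)) (u + 1)]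
    apply Finset.sum_congr rfl
    intro j hj
    simp only [Finset.mem_range] at hj
    congr 1
    omega
  rw [hsplit]
  apply Finset.sum_nonneg
  intro k hk
  simp only [Finset.mem_range] at hk
  have hk' : k ≤ u := by omega
  set i : ℕ := u - k with hi
  -- rewrite f k
  have e1 : (v : ℤ) + u - k = (v : ℤ) + i := by omega
  have e2 : (w : ℤ) + u - k = (w : ℤ) + i := by omega
  -- rewrite f (2u+1-k)
  have e3 : ((2 * u + 1 - k : ℕ) : ℤ) = 2 * u + 1 - k := by omega
  have e4 : (v : ℤ) + u - ((2 * u + 1 - k : ℕ) : ℤ) = (v : ℤ) - i - 1 := by omega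
  have e5 : (w : ℤ) + u - ((2 * u + 1 - k : ℕ) : ℤ) = (w : ℤ) - i - 1 := by omega
  have c1 : C (2 * u + 1) ((2 * u + 1 - k : ℕ) : ℤ) = C (2 * u + 1) (k : ℤ) := by
    rw [e3, ← show ((2 * u + 1 : ℕ) : ℤ) - k = 2 * u + 1 - (k : ℤ) by push_cast; ring,
      ← C_symm]
  have c2 : C (2 * v) ((v : ℤ) - i - 1) = C (2 * v) ((v : ℤ) + i + 1) := by
    rw [C_symm (2 * v) ((v : ℤ) + i + 1)]
    congr 1
    push_cast
    ring
  have c3 : C (2 * w) ((w : ℤ) - i - 1) = C (2 * w) ((w : ℤ) + i + 1) := by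
    rw [C_symm (2 * w) ((w : ℤ) + i + 1)]
    congr 1
    push_cast
    ring
  have c4 : C (2 * w) ((w : ℤ) - i - 1 + 1) = C (2 * w) ((w : ℤ) + i) := by
    rw [C_symm (2 * w) ((w : ℤ) + i)]
    congr 1
    push_cast
    ring
  have key : f k + f (2 * u + 1 - k)
      = C (2 * u + 1) (k : ℤ) *
        ((C (2 * v) ((v : ℤ) + i) - C (2 * v) ((v : ℤ) + i + 1)) *
         (C (2 * w) ((w : ℤ) + i) - C (2 * w) ((w : ℤ) + i + 1))) := by
    simp only [hf, e1, e2, e4, e5, c1, c2, c3, c4]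
    ring
  rw [key]
  have h1 := C_dec v i
  have h2 := C_dec w i
  exact mul_nonneg (C_nonneg _ _)
    (mul_nonneg (by linarith) (by linarith))
end
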